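/- arXiv:2005.07812 — 2 statements merged into one kernel-verified Lean document; each statement's English description precedes it below -/
import Mathlib

section
/- Let n > 2 and let K_N be a diagonal positive definite n×n matrix. Then (K_N^{-1} + Iₙ)^{-1} admits a decomposition Q · diag(γI_{n-2}, S) · Qᵀ with Q orthonormal whose last column is (1/√n)1ₙ and S = [[γ, v],[v, a]] (for some γ, a ∈ (0,1), v ∈ ℝ with v² < min{aγ, (1-a)(1-γ)}) if and only if K_N = c·Iₙ for some constant c > 0. -/
open Matrix

/-!
Write `M = (K⁻¹ + 1)⁻¹ = diagonal μ` with `μᵢ = (dᵢ⁻¹ + 1)⁻¹`, so the decomposition reads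
`M Q = Q B`. If `v ≠ 0`, the column equation `M q = γ q + v ℓ` (with `ℓ` the last column of `Q`,
which has no zero entry) forces `μᵢ ≠ γ` for all `i`; then `M - γ` is invertible and kills the
`m ≥ 1` columns of the `γ`-block, which are unit vectors. Hence `v = 0`, `ℓ` is an eigenvector
of `M` for `a`, and all `μᵢ` (hence all `dᵢ`) coincide. Conversely, for `K = c • 1` any
orthogonal `Q` with the prescribed last column (an orthonormal basis extending it) works, with
`γ = a = (c⁻¹ + 1)⁻¹` and `v = 0`.
-/

namespace Matrix

theorem exists_orthogonal_col_eq {n : Type*} [Fintype n] [DecidableEq n]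
    (u : EuclideanSpace ℝ n) (hu : ‖u‖ = 1) (j : n) :
    ∃ Q : Matrix n n ℝ, Qᵀ * Q = 1 ∧ ∀ i, Q i j = u i := by
  have hu' : Orthonormal ℝ (({j} : Set n).domRestrict fun _ => u) :=
    ⟨fun _ => hu, fun i k hik => (hik (Subsingleton.elim i k)).elim⟩
  obtain ⟨b, hb⟩ := hu'.exists_orthonormalBasis_extension_of_card_eq (by simp)
  refine ⟨(EuclideanSpace.basisFun n ℝ).toBasis.toMatrix b, ?_, fun i => ?_⟩
  · simpa using (EuclideanSpace.basisFun n ℝ).toMatrix_orthonormalBasis_conjTranspose_mul_self b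
  · simp [Module.Basis.toMatrix_apply, hb j rfl]

theorem exists_orthogonal_last_col_eq_const (m : ℕ) :
    ∃ Q : Matrix (Fin (m + 2)) (Fin (m + 2)) ℝ,
      Qᵀ * Q = 1 ∧ ∀ i, Q i (Fin.last (m + 1)) = (Real.sqrt (m + 2))⁻¹ := by
  refine exists_orthogonal_col_eq (WithLp.toLp 2 fun _ => (Real.sqrt (m + 2))⁻¹) ?_ _
  rw [EuclideanSpace.norm_eq]
  simpa using mul_inv_cancel₀ (Real.sqrt_pos.2 (by positivity : (0 : ℝ) < m + 2)).ne'

section Reindex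

variable {R ι n n' : Type*} [Semiring R]

theorem mul_reindex_mul_transpose [Fintype n] [Fintype n'] (Q : Matrix ι n' R) (e : n ≃ n')
    (X : Matrix n n R) :
    Q * reindex e e X * Qᵀ = Q.submatrix id e * X * (Q.submatrix id e)ᵀ := by
  have hQ : Q = (Q.submatrix id e).submatrix id e.symm := by simp
  conv_lhs => rw [hQ]
  rw [reindex_apply, transpose_submatrix, submatrix_mul_equiv, submatrix_mul_equiv]
  simp

theorem transpose_submatrix_mul_submatrix [Fintype ι] (Q : Matrix ι n' R) (e : n ≃ n') :
    (Q.submatrix id e)ᵀ * Q.submatrix id e = (Qᵀ * Q).submatrix e e := by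
  rw [transpose_submatrix, submatrix_mul _ _ _ _ _ Function.bijective_id]

end Reindex

section Diagonal

variable {𝕜 ι : Type*} [Field 𝕜] [Fintype ι] [DecidableEq ι]

theorem inv_diagonal_of_ne_zero {d : ι → 𝕜} (hd : ∀ i, d i ≠ 0) :
    (diagonal d)⁻¹ = diagonal d⁻¹ :=
  inv_eq_right_inv <| by
    rw [diagonal_mul_diagonal, ← diagonal_one]
    exact congrArg diagonal (funext fun i => mul_inv_cancel₀ (hd i))

theorem inv_inv_diagonal_add_one [LinearOrder 𝕜] [IsStrictOrderedRing 𝕜] {d : ι → 𝕜}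
    (hd : ∀ i, 0 < d i) : ((diagonal d)⁻¹ + 1)⁻¹ = diagonal (d⁻¹ + 1)⁻¹ := by
  rw [inv_diagonal_of_ne_zero fun i => (hd i).ne', ← diagonal_one, diagonal_add]
  exact inv_diagonal_of_ne_zero fun i => (show (d i)⁻¹ + 1 ≠ 0 by have := hd i; positivity)

variable {n : Type*} {μ : ι → 𝕜} {γ v a : 𝕜}

theorem eq_zero_of_diagonal_mul_eq_smul {P : Matrix ι n 𝕜}
    (hP : diagonal μ * P = γ • P) (hμ : ∀ i, μ i ≠ γ) : P = 0 := by
  ext i j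
  have h : (μ i - γ) * P i j = 0 := by
    have := congrFun (congrFun hP i) j
    simp only [diagonal_mul, smul_apply, smul_eq_mul] at this
    rw [sub_mul, this, sub_self]
  exact (mul_eq_zero.mp h).resolve_left (sub_ne_zero.mpr (hμ i))

theorem apply_of_diagonal_mul_eq_mul_fin_two {P : Matrix ι (Fin 2) 𝕜}
    (hP : diagonal μ * P = P * !![γ, v; v, a]) (i : ι) :
    μ i * P i 0 = γ * P i 0 + v * P i 1 ∧ μ i * P i 1 = v * P i 0 + a * P i 1 := by
  have h := congrFun (congrFun hP i)
  simp only [diagonal_mul] at h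
  simp only [mul_apply, Fin.sum_univ_two] at h
  exact ⟨by simpa [mul_comm] using h 0, by simpa [mul_comm] using h 1⟩

variable [Fintype n] [DecidableEq n] [Nonempty n]

theorem eq_of_diagonal_eq_conj_fromBlocks {P : Matrix ι (n ⊕ Fin 2) 𝕜} (hP : Pᵀ * P = 1)
    (hM : diagonal μ = P * fromBlocks (γ • (1 : Matrix n n 𝕜)) 0 0 !![γ, v; v, a] * Pᵀ)
    (hP₂ : ∀ i, P i (Sum.inr 1) ≠ 0) (i : ι) : μ i = a := by
  have hMP : diagonal μ * P = P * fromBlocks (γ • (1 : Matrix n n 𝕜)) 0 0 !![γ, v; v, a] := by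
    rw [hM, Matrix.mul_assoc, hP, Matrix.mul_one]
  rw [← fromCols_toCols P] at hP hMP
  rw [mul_fromCols, fromCols_mul_fromBlocks] at hMP
  obtain ⟨h₁, h₂⟩ := fromCols_inj hMP
  simp only [Matrix.mul_zero, add_zero, zero_add, Matrix.mul_smul, Matrix.mul_one] at h₁ h₂
  have hP₁ : P.toCols₁ᵀ * P.toCols₁ = 1 := by
    rw [transpose_fromCols, fromRows_mul_fromCols, ← fromBlocks_one] at hP
    exact (fromBlocks_inj.mp hP).1
  have hv : v = 0 := by
    by_contra hv
    have hμ : ∀ i, μ i ≠ γ := fun i hi => by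
      have := (apply_of_diagonal_mul_eq_mul_fin_two h₂ i).1
      rw [hi, left_eq_add, mul_eq_zero] at this
      exact this.elim hv (hP₂ i)
    have := eq_zero_of_diagonal_mul_eq_smul h₁ hμ
    exact one_ne_zero (hP₁.symm.trans (by simp [this]))
  have := (apply_of_diagonal_mul_eq_mul_fin_two h₂ i).2
  rw [hv, zero_mul, zero_add] at this
  exact mul_right_cancel₀ (hP₂ i) this

variable {Q : Matrix ι ι 𝕜} (e : n ⊕ Fin 2 ≃ ι)

theorem eq_of_diagonal_eq_conj_reindex_fromBlocks (hQ : Qᵀ * Q = 1)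
    (hM : diagonal μ =
      Q * reindex e e (fromBlocks (γ • (1 : Matrix n n 𝕜)) 0 0 !![γ, v; v, a]) * Qᵀ)
    (hlast : ∀ i, Q i (e (Sum.inr 1)) ≠ 0) (i : ι) : μ i = a :=
  eq_of_diagonal_eq_conj_fromBlocks
    (by rw [transpose_submatrix_mul_submatrix, hQ, submatrix_one_equiv])
    (hM.trans (mul_reindex_mul_transpose _ _ _)) hlast i

omit [Fintype n] [Nonempty n] in
theorem conj_reindex_fromBlocks_smul_one (hQ : Qᵀ * Q = 1) :
    Q * reindex e e (fromBlocks (γ • (1 : Matrix n n 𝕜)) 0 0 !![γ, 0; 0, γ]) * Qᵀ = γ • 1 := by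
  have hS : fromBlocks (γ • (1 : Matrix n n 𝕜)) 0 0 !![γ, 0; 0, γ] = γ • 1 := by
    rw [← fromBlocks_one, fromBlocks_smul, smul_zero, one_fin_two]
    simp
  have hR : reindex e e (γ • 1 : Matrix (n ⊕ Fin 2) (n ⊕ Fin 2) 𝕜) = γ • 1 := by
    ext i j
    simp [one_apply]
  rw [hS, hR, Matrix.mul_smul, Matrix.mul_one, Matrix.smul_mul, mul_eq_one_comm.mp hQ]

end Diagonal

end Matrix

/-- For `n = m + 2 > 2` and `K_N` diagonal positive definite, the matrix
`(K_N⁻¹ + Iₙ)⁻¹` admits a decomposition `Q · diag(γ I_{n-2}, S) · Qᵀ` with `Q`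
orthonormal having last column `(1/√n)·1ₙ` and `S = [[γ,v],[v,a]]` (with
`γ, a ∈ (0,1)`, `v² < min{aγ, (1-a)(1-γ)}`) if and only if `K_N = c·Iₙ`
for some `c > 0`. -/
theorem diagonal_linear_iff_isotropic (m : ℕ) (hm : 1 ≤ m)
    (K : Matrix (Fin (m + 2)) (Fin (m + 2)) ℝ)
    (hdiag : K.IsDiag) (hpd : K.PosDef) :
    (∃ (Q : Matrix (Fin (m + 2)) (Fin (m + 2)) ℝ) (γ a v : ℝ),
        Qᵀ * Q = 1 ∧
        (∀ i, Q i (Fin.last (m + 1)) = (Real.sqrt (m + 2))⁻¹) ∧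
        0 < γ ∧ γ < 1 ∧ 0 < a ∧ a < 1 ∧
        v ^ 2 < min (a * γ) ((1 - a) * (1 - γ)) ∧
        (K⁻¹ + 1)⁻¹ =
          Q * (Matrix.reindex finSumFinEquiv finSumFinEquiv
            (Matrix.fromBlocks (γ • (1 : Matrix (Fin m) (Fin m) ℝ)) 0 0
              !![γ, v; v, a])) * Qᵀ)
      ↔ ∃ c : ℝ, 0 < c ∧ K = c • (1 : Matrix (Fin (m + 2)) (Fin (m + 2)) ℝ) := by
  obtain ⟨d, rfl, hd⟩ : ∃ d, K = diagonal d ∧ ∀ i, 0 < d i :=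
    ⟨K.diag, hdiag.diagonal_diag.symm, posDef_diagonal_iff.mp (hdiag.diagonal_diag.symm ▸ hpd)⟩
  rw [inv_inv_diagonal_add_one hd]
  constructor
  · rintro ⟨Q, γ, a, v, hQ, hlast, -, -, -, -, -, hM⟩
    have : Nonempty (Fin m) := ⟨⟨0, hm⟩⟩
    have hlast_idx : (finSumFinEquiv (Sum.inr 1) : Fin (m + 2)) = Fin.last (m + 1) := by
      ext; simp
    have hμ := eq_of_diagonal_eq_conj_reindex_fromBlocks _ hQ hM
      (fun j => by simp [hlast_idx, hlast]; positivity)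
    refine ⟨d 0, hd 0, ?_⟩
    rw [smul_one_eq_diagonal]
    congr 1
    funext i
    simpa using (hμ i).trans (hμ 0).symm
  · rintro ⟨c, hc, hK⟩
    obtain rfl : d = fun _ => c := diagonal_injective (hK.trans (smul_one_eq_diagonal c))
    obtain ⟨Q, hQ, hlast⟩ := exists_orthogonal_last_col_eq_const m
    have hγ₀ : 0 < (c⁻¹ + 1)⁻¹ := by positivity
    have hγ₁ : (c⁻¹ + 1)⁻¹ < 1 := inv_lt_one_of_one_lt₀ (by simp [hc])
    refine ⟨Q, _, _, 0, hQ, hlast, hγ₀, hγ₁, hγ₀, hγ₁, by simp [hγ₀, hγ₁], ?_⟩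
    rw [conj_reindex_fromBlocks_smul_one _ hQ, smul_one_eq_diagonal]
    rfl
end

section
/- Let Z ~ N(0, Iₙ), let C_τ and C_π be closed cones in ℝⁿ such that C_π = P·C_τ for a permutation-reflection (orthogonal) matrix P satisfying ‖x - Pᵀy‖ ≤ ‖x - y‖ for all x ∈ C_τ, y ∈ C_π, and let μ ∈ C_τ. Then Pr(Z + μ ∈ C_π) ≤ Pr(Z + μ ∈ C_τ). -/
open MeasureTheory ProbabilityTheory Matrix Pointwise
open scoped ENNReal NNReal Real

/-- Tonelli for a product of one-variable functions over pi Lebesgue measure. -/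
lemma lintegral_pi_prod {n : ℕ} (f : Fin n → ℝ → ℝ≥0∞) (hf : ∀ i, Measurable (f i)) :
    ∫⁻ x : Fin n → ℝ, ∏ i, f i (x i) ∂(Measure.pi fun _ : Fin n => (volume : Measure ℝ)) =
      ∏ i, ∫⁻ y, f i y := by
  induction n with
  | zero => simp
  | succ n ih =>
    have h := (measurePreserving_piFinSuccAbove (fun _ : Fin (n+1) => (volume : Measure ℝ)) 0).symm
    rw [← h.lintegral_comp (by
      exact Finset.measurable_prod _ fun i _ => (hf i).comp (measurable_pi_apply i))]
    simp_rw [MeasurableEquiv.piFinSuccAbove_symm_apply, Fin.insertNthEquiv,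
      Fin.prod_univ_succ, Fin.insertNth_zero, Equiv.coe_fn_mk, Fin.cons_zero, Fin.cons_succ]
    simp only [cast_eq]
    rw [lintegral_prod_mul (f := fun a : ℝ => f 0 a)
      (g := fun x : Fin n → ℝ => ∏ i, f (Fin.succ i) (x i)) (hf 0).aemeasurable
      (Finset.measurable_prod _ fun i _ => (hf i.succ).comp (measurable_pi_apply i)).aemeasurable]
    rw [ih (fun i => f (Fin.succ i)) (fun i => hf _)]

lemma gaussian_pi_eq_withDensity (n : ℕ) :
    (Measure.pi fun _ : Fin n => gaussianReal 0 1) =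
      (volume : Measure (Fin n → ℝ)).withDensity fun z => ∏ i, gaussianPDF 0 1 (z i) := by
  have h1 : (gaussianReal 0 1 : Measure ℝ) = volume.withDensity (gaussianPDF 0 1) :=
    if_neg one_ne_zero
  apply Measure.pi_eq
  intro s hs
  rw [withDensity_apply _ (MeasurableSet.univ_pi hs), ← lintegral_indicator (MeasurableSet.univ_pi hs)]
  have key : ∀ z : Fin n → ℝ, (Set.univ.pi s).indicator (fun z => ∏ i, gaussianPDF 0 1 (z i)) z
      = ∏ i, (s i).indicator (gaussianPDF 0 1) (z i) := by
    intro z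
    by_cases hz : z ∈ Set.univ.pi s
    · rw [Set.indicator_of_mem hz]
      exact Finset.prod_congr rfl fun i _ =>
        (Set.indicator_of_mem (hz i (Set.mem_univ i)) _).symm
    · rw [Set.indicator_of_notMem hz]
      obtain ⟨i, his⟩ : ∃ i, z i ∉ s i := by simpa [Set.mem_pi] using hz
      exact (Finset.prod_eq_zero (Finset.mem_univ i) (Set.indicator_of_notMem his _)).symm
  simp_rw [key]
  rw [volume_pi, lintegral_pi_prod _
    (fun i => (measurable_gaussianPDF 0 1).indicator (hs i))]
  refine Finset.prod_congr rfl fun i _ => ?_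
  rw [h1, withDensity_apply _ (hs i), ← lintegral_indicator (hs i)]

lemma gaussian_prod_pdf {n : ℕ} (v : Fin n → ℝ) :
    ∏ i, gaussianPDF 0 1 (v i) =
      ENNReal.ofReal ((√(2 * π))⁻¹ ^ n * Real.exp (-(∑ i, v i ^ 2) / 2)) := by
  simp only [gaussianPDF]
  rw [ENNReal.ofReal_prod_of_nonneg (fun i _ => gaussianPDFReal_nonneg 0 1 (v i)) |>.symm]
  congr 1
  simp only [gaussianPDFReal, NNReal.coe_one, mul_one, sub_zero]
  rw [Finset.prod_mul_distrib, Finset.prod_const, Finset.card_univ, Fintype.card_fin,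
    ← Real.exp_sum]
  congr 1
  rw [← Finset.sum_div, Finset.sum_neg_distrib]

lemma ofReal_pdf_mono {n : ℕ} {a b : ℝ} (h : b ≤ a) :
    ENNReal.ofReal ((√(2 * π))⁻¹ ^ n * Real.exp (-a / 2)) ≤
      ENNReal.ofReal ((√(2 * π))⁻¹ ^ n * Real.exp (-b / 2)) := by
  apply ENNReal.ofReal_le_ofReal
  apply mul_le_mul_of_nonneg_left _ (by positivity)
  apply Real.exp_le_exp.mpr
  linarith

lemma mulVec_norm_sq {n : ℕ} (P : Matrix (Fin n) (Fin n) ℝ) (hP : Pᵀ * P = 1)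
    (v : Fin n → ℝ) : ∑ i, (P.mulVec v i) ^ 2 = ∑ i, v i ^ 2 := by
  have h1 : ∀ w : Fin n → ℝ, ∑ i, w i ^ 2 = w ⬝ᵥ w := by
    intro w; simp [dotProduct, sq]
  rw [h1, h1, dotProduct_mulVec, ← mulVec_transpose, mulVec_mulVec, hP, one_mulVec]

/-- Let `Z ~ N(0, Iₙ)`, let `C_τ, C_π` be closed cones with `C_π = P·C_τ` for
an orthogonal matrix `P` satisfying the contraction property
`‖x - Pᵀy‖ ≤ ‖x - y‖` for all `x ∈ C_τ`, `y ∈ C_π`, and let `μ ∈ C_τ`. Then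
`Pr(Z + μ ∈ C_π) ≤ Pr(Z + μ ∈ C_τ)`. -/
theorem gaussian_cone_shift_ineq (n : ℕ) (Cτ Cπ : Set (Fin n → ℝ))
    (hτclosed : IsClosed Cτ) (hπclosed : IsClosed Cπ)
    (hτcone : ∀ x ∈ Cτ, ∀ t : ℝ, 0 < t → t • x ∈ Cτ)
    (hπcone : ∀ x ∈ Cπ, ∀ t : ℝ, 0 < t → t • x ∈ Cπ)
    (P : Matrix (Fin n) (Fin n) ℝ) (hP : Pᵀ * P = 1)
    (hmap : Cπ = P.mulVec '' Cτ)
    (hcontract : ∀ x ∈ Cτ, ∀ y ∈ Cπ,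
      ∑ i, (x i - Pᵀ.mulVec y i) ^ 2 ≤ ∑ i, (x i - y i) ^ 2)
    (μv : Fin n → ℝ) (hμ : μv ∈ Cτ) :
    (Measure.pi fun _ : Fin n => gaussianReal 0 1) ((fun z => z + μv) ⁻¹' Cπ)
      ≤ (Measure.pi fun _ : Fin n => gaussianReal 0 1) ((fun z => z + μv) ⁻¹' Cτ) := by
  classical
  set D : (Fin n → ℝ) → ℝ≥0∞ := fun v =>
    ENNReal.ofReal ((√(2 * π))⁻¹ ^ n * Real.exp (-(∑ i, v i ^ 2) / 2)) with hDdef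
  have hDm : Measurable D := by
    apply ENNReal.measurable_ofReal.comp
    apply Measurable.const_mul
    exact Real.measurable_exp.comp
      ((Finset.measurable_sum _ fun i _ => (measurable_pi_apply i).pow_const 2).neg.div_const 2)
  have hPPt : P * Pᵀ = 1 := mul_eq_one_comm.mp hP
  have hdet2 : P.det * P.det = 1 := by
    have h := congrArg Matrix.det hP
    rwa [det_mul, det_transpose, det_one, mul_comm] at h
  have hdet : |P.det| = 1 := by
    rcases mul_self_eq_one_iff.mp hdet2 with h | h <;> simp [h]
  have hdetne : P.det ≠ 0 := by
    intro h; rw [h] at hdet; simp at hdet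
  have hPinj : Function.Injective P.mulVec := by
    intro a b hab
    have h : Pᵀ.mulVec (P.mulVec a) = Pᵀ.mulVec (P.mulVec b) := by rw [hab]
    simpa [mulVec_mulVec, hP, one_mulVec] using h
  have hPmu : P.mulVec μv ∈ Cπ := hmap ▸ ⟨μv, hμ, rfl⟩
  have hmem : ∀ x, P.mulVec x ∈ Cπ ↔ x ∈ Cτ := by
    intro x
    rw [hmap]
    exact ⟨fun ⟨z, hz, he⟩ => (hPinj he) ▸ hz, fun h => ⟨x, h, rfl⟩⟩
  -- norm preservation for `Pᵀ`
  have hPt : Pᵀᵀ * Pᵀ = 1 := by rwa [transpose_transpose]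
  -- measurable sets
  have hAπ : MeasurableSet ((fun z : Fin n → ℝ => z + μv) ⁻¹' Cπ) :=
    hπclosed.measurableSet.preimage (measurable_id.add_const μv)
  have hAτ : MeasurableSet ((fun z : Fin n → ℝ => z + μv) ⁻¹' Cτ) :=
    hτclosed.measurableSet.preimage (measurable_id.add_const μv)
  have hprod : (fun z : Fin n → ℝ => ∏ i, gaussianPDF 0 1 (z i)) = D :=
    funext fun v => gaussian_prod_pdf v
  rw [gaussian_pi_eq_withDensity, withDensity_apply _ hAπ, withDensity_apply _ hAτ,
    ← lintegral_indicator hAπ, ← lintegral_indicator hAτ, hprod]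
  -- translation invariance
  have htrans : ∀ (S : Set (Fin n → ℝ)), IsClosed S →
      ∫⁻ z, ((fun z => z + μv) ⁻¹' S).indicator D z ∂volume
        = ∫⁻ y, S.indicator (fun y => D (y - μv)) y ∂volume := by
    intro S hS
    have h1 : ∀ z, ((fun z => z + μv) ⁻¹' S).indicator D z
        = S.indicator (fun y => D (y - μv)) (z + μv) := by
      intro z
      by_cases hz : z + μv ∈ S
      · rw [Set.indicator_of_mem hz, Set.indicator_of_mem (by exact hz), add_sub_cancel_right]
      · rw [Set.indicator_of_notMem hz, Set.indicator_of_notMem (by exact hz)]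
    simp_rw [h1]
    exact (measurePreserving_add_right volume μv).lintegral_comp
      ((hDm.comp (measurable_id.sub_const μv)).indicator hS.measurableSet)
  rw [htrans Cπ hπclosed, htrans Cτ hτclosed]
  -- pointwise comparison on Cπ
  have hpoint : ∀ y, Cπ.indicator (fun y => D (y - μv)) y
      ≤ Cπ.indicator (fun y => D (y - P.mulVec μv)) y := by
    intro y
    by_cases hy : y ∈ Cπ
    · rw [Set.indicator_of_mem hy, Set.indicator_of_mem hy]
      apply ofReal_pdf_mono
      have e1 : ∑ i, ((y - P.mulVec μv) i) ^ 2 = ∑ i, (μv i - Pᵀ.mulVec y i) ^ 2 := by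
        have h := mulVec_norm_sq Pᵀ hPt (y - P.mulVec μv)
        have h2 : Pᵀ.mulVec (y - P.mulVec μv) = Pᵀ.mulVec y - μv := by
          rw [mulVec_sub, mulVec_mulVec, hP, one_mulVec]
        rw [h2] at h
        rw [← h]
        exact Finset.sum_congr rfl fun i _ => by
          simp only [Pi.sub_apply]; ring
      have e2 : ∑ i, ((y - μv) i) ^ 2 = ∑ i, (μv i - y i) ^ 2 :=
        Finset.sum_congr rfl fun i _ => by simp only [Pi.sub_apply]; ring
      rw [e1, e2]
      exact hcontract μv hμ y hy
    · rw [Set.indicator_of_notMem hy, Set.indicator_of_notMem hy]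
  refine le_trans (lintegral_mono hpoint) (le_of_eq ?_)
  -- rotation change of variables
  have hmp : MeasurePreserving (Matrix.toLin' P) (volume : Measure (Fin n → ℝ)) volume := by
    refine ⟨?_, ?_⟩
    · exact (Matrix.toLin' P).continuous_of_finiteDimensional.measurable
    · rw [Real.map_matrix_volume_pi_eq_smul_volume_pi hdetne, abs_inv, hdet]
      simp
  have hGm : Measurable (Cπ.indicator (fun y => D (y - P.mulVec μv))) :=
    (hDm.comp (measurable_id.sub_const _)).indicator hπclosed.measurableSet
  rw [← hmp.lintegral_comp hGm]
  apply lintegral_congr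
  intro x
  have hx : Matrix.toLin' P x = P.mulVec x := Matrix.toLin'_apply P x
  rw [hx]
  by_cases hxτ : x ∈ Cτ
  · rw [Set.indicator_of_mem ((hmem x).mpr hxτ), Set.indicator_of_mem hxτ]
    have h3 : P.mulVec x - P.mulVec μv = P.mulVec (x - μv) := (mulVec_sub P x μv).symm
    rw [h3, hDdef]
    simp only
    rw [mulVec_norm_sq P hP]
  · rw [Set.indicator_of_notMem (fun h => hxτ ((hmem x).mp h)),
      Set.indicator_of_notMem hxτ]
end
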